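/- Let a_1, ..., a_n be an originator with iterated absolute differences d^k_j, and for 1 ≤ s ≤ n-1 define the trace τ_{n,s} = ∑_{k=1}^{n-s} d^s_k. Then for 1 ≤ s ≤ n-2, the inequality 2·τ_{n,s} ≥ (a_{s+1} - a_s) + d^{n-s}_s + τ_{n,s+1} holds. -/

import Mathlib

def dIter (a : ℕ → ℝ) : ℕ → ℕ → ℝ
  | 0, j => a j
  | k + 1, j => |dIter a k (j + 1) - dIter a k j|

/-- Trace inequality: `2·τ_{n,s} ≥ (a_{s+1} - a_s) + d^{n-s}_s + τ_{n,s+1}`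
for `1 ≤ s ≤ n-2`, where `τ_{n,s} = ∑_{k=1}^{n-s} d^k_s`. -/
theorem stmt_7 (n s : ℕ) (a : ℕ → ℝ) (hs1 : 1 ≤ s) (hs2 : s ≤ n - 2) :
    2 * ∑ k ∈ Finset.Icc 1 (n - s), dIter a k s ≥
      (a (s + 1) - a s) + dIter a (n - s) s +
        ∑ k ∈ Finset.Icc 1 (n - (s + 1)), dIter a k (s + 1) := by
  set m := n - s with hm
  have hm2 : 2 ≤ m := by omega
  have hms : n - (s + 1) = m - 1 := by omega
  rw [hms]
  -- key pointwise bound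
  have key : ∀ k, dIter a k (s + 1) ≤ dIter a k s + dIter a (k + 1) s := by
    intro k
    have h : dIter a (k + 1) s = |dIter a k (s + 1) - dIter a k s| := rfl
    rw [h]
    have := le_abs_self (dIter a k (s + 1) - dIter a k s)
    linarith
  have h1 : a (s + 1) - a s ≤ dIter a 1 s :=
    le_abs_self (a (s + 1) - a s)
  -- sum of key over Icc 1 (m-1)
  have hsum : ∑ k ∈ Finset.Icc 1 (m - 1), dIter a k (s + 1) ≤
      ∑ k ∈ Finset.Icc 1 (m - 1), dIter a k s +
      ∑ k ∈ Finset.Icc 2 m, dIter a k s := by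
    have hshift : ∑ k ∈ Finset.Icc 1 (m - 1), dIter a (k + 1) s =
        ∑ k ∈ Finset.Icc 2 m, dIter a k s := by
      apply Finset.sum_nbij' (fun k => k + 1) (fun k => k - 1) <;>
        simp (config := { contextual := true }) [Finset.mem_Icc] <;> omega
    rw [← hshift, ← Finset.sum_add_distrib]
    exact Finset.sum_le_sum fun k _ => key k
  -- split sum at top and bottom
  have htop : ∑ k ∈ Finset.Icc 1 m, dIter a k s =
      ∑ k ∈ Finset.Icc 1 (m - 1), dIter a k s + dIter a m s := by
    have : m = (m - 1) + 1 := by omega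
    rw [this, Finset.sum_Icc_succ_top (by omega), ← this]
  have hbot : ∑ k ∈ Finset.Icc 1 m, dIter a k s =
      dIter a 1 s + ∑ k ∈ Finset.Icc 2 m, dIter a k s := by
    rw [Finset.Icc_eq_cons_Ioc (by omega : 1 ≤ m), Finset.sum_cons,
      ← Finset.Icc_add_one_left_eq_Ioc]
    rfl
  have := hsum
  nlinarith [htop, hbot, h1]
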